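/- arXiv:1702.01766 — 2 statements merged into one kernel-verified Lean document; each statement's English description precedes it below -/
import Mathlib

section
/- Let k be a field, A and B commutative k-algebras, and R = A ⊗_k B. Let I ⊆ A and J ⊆ B be ideals, denoting also by I and J their extension ideals in R. Then I ∩ J = IJ in R. -/
open TensorProduct

/-- **Lemma 3.1**: for ideals `I ⊆ A`, `J ⊆ B` in commutative algebras over a field `k`, the
extensions of `I` and `J` in `R = A ⊗ₖ B` satisfy `I ∩ J = IJ`. -/
theorem extension_inf_eq_mul
    {k A B : Type} [Field k] [CommRing A] [CommRing B] [Algebra k A] [Algebra k B]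
    (I : Ideal A) (J : Ideal B) :
    Ideal.map (Algebra.TensorProduct.includeLeft : A →ₐ[k] A ⊗[k] B) I ⊓
      Ideal.map (Algebra.TensorProduct.includeRight : B →ₐ[k] A ⊗[k] B) J =
    Ideal.map (Algebra.TensorProduct.includeLeft : A →ₐ[k] A ⊗[k] B) I *
      Ideal.map (Algebra.TensorProduct.includeRight : B →ₐ[k] A ⊗[k] B) J := by
  refine le_antisymm ?_ Ideal.mul_le_inf
  -- notation
  set I' := I.restrictScalars k with hI'
  set J' := J.restrictScalars k with hJ'
  have hmkI : RingHom.ker (Ideal.Quotient.mkₐ k I : A →ₐ[k] A ⧸ I) = I := Ideal.mk_ker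
  have hmkJ : RingHom.ker (Ideal.Quotient.mkₐ k J : B →ₐ[k] B ⧸ J) = J := Ideal.mk_ker
  intro x hx
  obtain ⟨hxI, hxJ⟩ := hx
  -- x is killed by A ⊗ B → A ⊗ (B/J)
  have hkerJ : x ∈ LinearMap.ker (LinearMap.lTensor A (Ideal.Quotient.mkₐ k J).toLinearMap) := by
    have := Algebra.TensorProduct.lTensor_ker (A := A)
      (g := Ideal.Quotient.mkₐ k J) (Ideal.Quotient.mkₐ_surjective k J)
    rw [hmkJ] at this
    show Algebra.TensorProduct.map (AlgHom.id k A) (Ideal.Quotient.mkₐ k J) x = 0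
    rw [← RingHom.mem_ker, this]
    exact hxJ
  rw [(lTensor_exact A (Ideal.Quotient.mkₐ k J).toLinearMap.exact_subtype_ker_map
      (Ideal.Quotient.mkₐ_surjective k J)).linearMap_ker_eq] at hkerJ
  obtain ⟨y, rfl⟩ := hkerJ
  set ιJ := (LinearMap.ker (Ideal.Quotient.mkₐ k J).toLinearMap).subtype with hiJ
  -- now use that x is killed by A ⊗ B → (A/I) ⊗ B
  have hkerI : LinearMap.rTensor B (Ideal.Quotient.mkₐ k I).toLinearMap
      (LinearMap.lTensor A ιJ y) = 0 := by
    have := Algebra.TensorProduct.rTensor_ker (R := k) (S := k) (C := B)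
      (f := Ideal.Quotient.mkₐ k I) (Ideal.Quotient.mkₐ_surjective k I)
    rw [hmkI] at this
    have h0 : Algebra.TensorProduct.map (Ideal.Quotient.mkₐ k I) (AlgHom.id k B)
        (LinearMap.lTensor A ιJ y) = 0 := by
      rw [← RingHom.mem_ker, this]; exact hxI
    exact h0
  -- commute: rTensor ∘ lTensor = lTensor ∘ rTensor
  have hcomm : LinearMap.rTensor B (Ideal.Quotient.mkₐ k I).toLinearMap
        (LinearMap.lTensor A ιJ y)
      = LinearMap.lTensor (A ⧸ I) ιJ
        (LinearMap.rTensor _ (Ideal.Quotient.mkₐ k I).toLinearMap y) := by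
    rw [← LinearMap.comp_apply, ← LinearMap.comp_apply,
      LinearMap.rTensor_comp_lTensor, LinearMap.lTensor_comp_rTensor]
  rw [hcomm] at hkerI
  -- (A/I) ⊗ ker(mkJ) → (A/I) ⊗ B is injective since everything is flat over a field
  have hinj : Function.Injective (LinearMap.lTensor (A ⧸ I) ιJ) :=
    Module.Flat.lTensor_preserves_injective_linearMap ιJ (Submodule.injective_subtype _)
  have hy0 : LinearMap.rTensor _ (Ideal.Quotient.mkₐ k I).toLinearMap y = 0 := by
    apply hinj
    rw [hkerI, map_zero]
  have hy : y ∈ LinearMap.ker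
      (LinearMap.rTensor (LinearMap.ker (Ideal.Quotient.mkₐ k J).toLinearMap)
        (Ideal.Quotient.mkₐ k I).toLinearMap) := hy0
  rw [(rTensor_exact _ (Ideal.Quotient.mkₐ k I).toLinearMap.exact_subtype_ker_map
      (Ideal.Quotient.mkₐ_surjective k I)).linearMap_ker_eq] at hy
  obtain ⟨z, rfl⟩ := hy
  set ιI := (LinearMap.ker (Ideal.Quotient.mkₐ k I).toLinearMap).subtype with hiI
  -- finish: image of I ⊗ J lies in the product ideal
  have key : ∀ z : (LinearMap.ker (Ideal.Quotient.mkₐ k I).toLinearMap) ⊗[k]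
      (LinearMap.ker (Ideal.Quotient.mkₐ k J).toLinearMap),
      LinearMap.lTensor A ιJ (LinearMap.rTensor _ ιI z) ∈
        Ideal.map (Algebra.TensorProduct.includeLeft : A →ₐ[k] A ⊗[k] B) I *
          Ideal.map (Algebra.TensorProduct.includeRight : B →ₐ[k] A ⊗[k] B) J := by
    intro z
    induction z with
    | zero => simp
    | tmul a b =>
      simp only [LinearMap.rTensor_tmul, LinearMap.lTensor_tmul]
      have : ιI a ⊗ₜ[k] ιJ b = (ιI a ⊗ₜ[k] (1 : B)) * ((1 : A) ⊗ₜ[k] ιJ b) := by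
        rw [Algebra.TensorProduct.tmul_mul_tmul, mul_one, one_mul]
      rw [this]
      refine Ideal.mul_mem_mul ?_ ?_
      · exact Ideal.mem_map_of_mem Algebra.TensorProduct.includeLeft
          (Ideal.Quotient.eq_zero_iff_mem.mp a.2)
      · exact Ideal.mem_map_of_mem Algebra.TensorProduct.includeRight
          (Ideal.Quotient.eq_zero_iff_mem.mp b.2)
    | add u v hu hv => rw [map_add, map_add]; exact add_mem hu hv
  exact key z
end

section
/- Let k be a field, A and B commutative k-algebras, and R = A ⊗_k B. Let I' ⊆ I be ideals of A and J' ⊆ J be ideals of B. Then there is an isomorphism of R-modules (I/I') ⊗_k (J/J') ≅ IJ / (IJ' + I'J), where all products are taken between the extension ideals in R. -/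
open TensorProduct LinearMap

section TensorModule

variable {k A B M N : Type} [Field k] [CommRing A] [CommRing B]
  [Algebra k A] [Algebra k B]
  [AddCommGroup M] [Module k M] [Module A M] [IsScalarTower k A M]
  [AddCommGroup N] [Module k N] [Module B N] [IsScalarTower k B N]

/-- The algebra homomorphism letting `B` act on `M ⊗[k] N` through the right tensor factor. -/
noncomputable def rightEnd (M : Type) [AddCommGroup M] [Module k M] :
    B →ₐ[k] Module.End k (M ⊗[k] N) where
  toFun b := lTensor M (Algebra.lsmul k k N b)
  map_one' := by
    show lTensor M (Algebra.lsmul k k N 1) = 1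
    rw [map_one]
    exact lTensor_id M N
  map_mul' b b' := by
    show lTensor M (Algebra.lsmul k k N (b * b')) = _
    rw [map_mul, Module.End.mul_eq_comp, Module.End.mul_eq_comp, lTensor_comp]
  map_zero' := by
    show lTensor M (Algebra.lsmul k k N 0) = 0
    rw [map_zero]
    exact lTensor_zero M
  map_add' b b' := by
    show lTensor M (Algebra.lsmul k k N (b + b')) = _
    rw [map_add]
    exact lTensor_add M _ _
  commutes' c := by
    show lTensor M (Algebra.lsmul k k N (algebraMap k B c)) = _
    rw [AlgHom.commutes, Module.algebraMap_end_eq_smul_id, Module.algebraMap_end_eq_smul_id,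
      lTensor_smul, lTensor_id]

/-- The `A ⊗[k] B`-module structure on `M ⊗[k] N`, where `M` is an `A`-module and `N` is a
`B`-module, everything compatibly over `k`. -/
noncomputable def tensorTensorModule : Module (A ⊗[k] B) (M ⊗[k] N) :=
  Module.compHom _
    (Algebra.TensorProduct.lift
      (Algebra.lsmul k k (M ⊗[k] N) : A →ₐ[k] Module.End k (M ⊗[k] N))
      (rightEnd M)
      (by
        intro a b
        show _ * _ = _ * _
        apply TensorProduct.ext'
        intro m n
        show (Algebra.lsmul k k (M ⊗[k] N) a) (lTensor M (Algebra.lsmul k k N b) (m ⊗ₜ n))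
          = lTensor M (Algebra.lsmul k k N b) ((Algebra.lsmul k k (M ⊗[k] N) a) (m ⊗ₜ n))
        simp only [lTensor_tmul, Algebra.lsmul_coe, smul_tmul', lTensor_tmul])).toRingHom

end TensorModule

section Helpers2

variable {k A B M N : Type} [Field k] [CommRing A] [CommRing B]
  [Algebra k A] [Algebra k B]
  [AddCommGroup M] [Module k M] [Module A M] [IsScalarTower k A M]
  [AddCommGroup N] [Module k N] [Module B N] [IsScalarTower k B N]

lemma myComm : ∀ (a : A) (b : B),
    Commute ((Algebra.lsmul k k (M ⊗[k] N) : A →ₐ[k] Module.End k (M ⊗[k] N)) a)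
      ((rightEnd M : B →ₐ[k] Module.End k (M ⊗[k] N)) b) := by
  intro a b
  show _ * _ = _ * _
  apply TensorProduct.ext'
  intro m n
  show (Algebra.lsmul k k (M ⊗[k] N) a) (lTensor M (Algebra.lsmul k k N b) (m ⊗ₜ n))
    = lTensor M (Algebra.lsmul k k N b) ((Algebra.lsmul k k (M ⊗[k] N) a) (m ⊗ₜ n))
  simp only [lTensor_tmul, Algebra.lsmul_coe, smul_tmul', lTensor_tmul]

lemma tensorTensorModule_smul_def (r : A ⊗[k] B) (x : M ⊗[k] N) :
    (letI : Module (A ⊗[k] B) (M ⊗[k] N) := tensorTensorModule; r • x) =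
      Algebra.TensorProduct.lift
        (Algebra.lsmul k k (M ⊗[k] N) : A →ₐ[k] Module.End k (M ⊗[k] N))
        (rightEnd M) myComm r x := rfl

lemma tensorTensorModule_smul_tmul (a : A) (b : B) (m : M) (n : N) :
    (letI : Module (A ⊗[k] B) (M ⊗[k] N) := tensorTensorModule;
      (a ⊗ₜ[k] b) • (m ⊗ₜ[k] n)) = (a • m) ⊗ₜ[k] (b • n) := by
  rw [tensorTensorModule_smul_def, Algebra.TensorProduct.lift_tmul]
  show (Algebra.lsmul k k (M ⊗[k] N) a) (lTensor M (Algebra.lsmul k k N b) (m ⊗ₜ n)) = _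
  simp only [lTensor_tmul, Algebra.lsmul_coe, smul_tmul']

end Helpers2
section Helpers
variable {k A B : Type} [Field k] [CommRing A] [CommRing B] [Algebra k A] [Algebra k B]

lemma range_tensor_map {M₁ M₂ : Type} [AddCommGroup M₁] [Module k M₁]
    [AddCommGroup M₂] [Module k M₂]
    (P : Ideal A) (Q : Ideal B) (f : M₁ →ₗ[k] A) (g : M₂ →ₗ[k] B)
    (hfr : ∀ x, f x ∈ P) (hgr : ∀ y, g y ∈ Q)
    (hfs : ∀ a ∈ P, ∃ x, f x = a) (hgs : ∀ b ∈ Q, ∃ y, g y = b) :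
    LinearMap.range (TensorProduct.map f g) =
      (Ideal.map (Algebra.TensorProduct.includeLeft : A →ₐ[k] A ⊗[k] B) P *
        Ideal.map (Algebra.TensorProduct.includeRight : B →ₐ[k] A ⊗[k] B) Q).restrictScalars k := by
  have hmul : ∀ (r : A ⊗[k] B) (z : M₁ ⊗[k] M₂),
      r * TensorProduct.map f g z ∈ LinearMap.range (TensorProduct.map f g) := by
    intro r z
    induction z using TensorProduct.induction_on with
    | zero => simp
    | tmul x y =>
      induction r using TensorProduct.induction_on with
      | zero => simp
      | tmul a b =>
        obtain ⟨x', hx'⟩ := hfs (a * f x) (P.mul_mem_left a (hfr x))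
        obtain ⟨y', hy'⟩ := hgs (b * g y) (Q.mul_mem_left b (hgr y))
        exact ⟨x' ⊗ₜ y', by
          simp [TensorProduct.map_tmul, Algebra.TensorProduct.tmul_mul_tmul, hx', hy']⟩
      | add r₁ r₂ h₁ h₂ => rw [add_mul]; exact add_mem h₁ h₂
    | add z₁ z₂ h₁ h₂ => rw [map_add, mul_add]; exact add_mem h₁ h₂
  set K : Ideal (A ⊗[k] B) :=
    { carrier := LinearMap.range (TensorProduct.map f g)
      add_mem' := fun h₁ h₂ => add_mem h₁ h₂
      zero_mem' := zero_mem _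
      smul_mem' := fun r x hx => by
        obtain ⟨z, rfl⟩ := hx
        simpa [smul_eq_mul] using hmul r z } with hK
  have hKr : LinearMap.range (TensorProduct.map f g) = K.restrictScalars k := by
    ext x; rfl
  have key : K = Ideal.map (Algebra.TensorProduct.includeLeft : A →ₐ[k] A ⊗[k] B) P *
      Ideal.map (Algebra.TensorProduct.includeRight : B →ₐ[k] A ⊗[k] B) Q := by
    apply le_antisymm
    · intro x hx
      obtain ⟨z, rfl⟩ : x ∈ LinearMap.range (TensorProduct.map f g) := hx
      have : LinearMap.range (TensorProduct.map f g) ≤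
          ((Ideal.map (Algebra.TensorProduct.includeLeft : A →ₐ[k] A ⊗[k] B) P *
            Ideal.map (Algebra.TensorProduct.includeRight : B →ₐ[k] A ⊗[k] B) Q).restrictScalars k) := by
        rw [TensorProduct.range_map_eq_span_tmul]
        rw [Submodule.span_le]
        rintro _ ⟨m, n, rfl⟩
        have : f m ⊗ₜ[k] g n = ((f m ⊗ₜ[k] (1 : B)) * ((1 : A) ⊗ₜ[k] g n) : A ⊗[k] B) := by
          rw [Algebra.TensorProduct.tmul_mul_tmul, mul_one, one_mul]
        rw [SetLike.mem_coe, Submodule.restrictScalars_mem, this]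
        exact Ideal.mul_mem_mul (Ideal.mem_map_of_mem _ (hfr m)) (Ideal.mem_map_of_mem _ (hgr n))
      exact this ⟨z, rfl⟩
    · rw [Ideal.map, Ideal.map, Ideal.span_mul_span']
      rw [Ideal.span_le]
      rintro _ ⟨u, hu, v, hv, rfl⟩
      obtain ⟨a, ha, rfl⟩ := hu
      obtain ⟨b, hb, rfl⟩ := hv
      obtain ⟨x, hx⟩ := hfs a ha
      obtain ⟨y, hy⟩ := hgs b hb
      exact ⟨x ⊗ₜ y, by
        simp [TensorProduct.map_tmul, hx, hy, Algebra.TensorProduct.includeLeft_apply,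
          Algebra.TensorProduct.includeRight_apply, Algebra.TensorProduct.tmul_mul_tmul]⟩
  rw [hKr, key]


set_option maxHeartbeats 2000000 in
/-- **Lemma 3.2**: for ideals `I' ⊆ I ⊆ A` and `J' ⊆ J ⊆ B` and `R = A ⊗ₖ B`, there is an
isomorphism of `R`-modules `(I/I') ⊗ₖ (J/J') ≅ IJ/(IJ' + I'J)`, all products being taken
between the extension ideals in `R`. -/
theorem tensor_quotient_iso
    {k A B : Type} [Field k] [CommRing A] [CommRing B] [Algebra k A] [Algebra k B]
    (I I' : Ideal A) (hI : I' ≤ I) (J J' : Ideal B) (hJ : J' ≤ J)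
    (IR I'R : Ideal (A ⊗[k] B)) (JR J'R : Ideal (A ⊗[k] B))
    (hIR : IR = Ideal.map (Algebra.TensorProduct.includeLeft : A →ₐ[k] A ⊗[k] B) I)
    (hI'R : I'R = Ideal.map (Algebra.TensorProduct.includeLeft : A →ₐ[k] A ⊗[k] B) I')
    (hJR : JR = Ideal.map (Algebra.TensorProduct.includeRight : B →ₐ[k] A ⊗[k] B) J)
    (hJ'R : J'R = Ideal.map (Algebra.TensorProduct.includeRight : B →ₐ[k] A ⊗[k] B) J') :
    letI : Module (A ⊗[k] B)
        ((↥I ⧸ Submodule.comap I.subtype I') ⊗[k] (↥J ⧸ Submodule.comap J.subtype J')) :=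
      tensorTensorModule
    Nonempty (((↥I ⧸ Submodule.comap I.subtype I') ⊗[k] (↥J ⧸ Submodule.comap J.subtype J'))
      ≃ₗ[A ⊗[k] B]
        (↥(IR * JR) ⧸ Submodule.comap (IR * JR).subtype (IR * J'R + I'R * JR))) := by
  classical
  let fI : ↥I →ₗ[k] A := I.subtype.restrictScalars k
  let fJ : ↥J →ₗ[k] B := J.subtype.restrictScalars k
  let φ : (↥I ⊗[k] ↥J) →ₗ[k] A ⊗[k] B := TensorProduct.map fI fJ
  have hinj : Function.Injective φ := by
    have h : φ = (LinearMap.lTensor A fJ).comp (LinearMap.rTensor ↥J fI) :=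
      TensorProduct.ext' fun x y => rfl
    rw [h]
    exact (Module.Flat.lTensor_preserves_injective_linearMap fJ Subtype.coe_injective).comp
      (Module.Flat.rTensor_preserves_injective_linearMap fI Subtype.coe_injective)
  have hrange : LinearMap.range φ = (IR * JR).restrictScalars k := by
    rw [hIR, hJR]
    exact range_tensor_map I J fI fJ (fun x => x.2) (fun y => y.2)
      (fun a ha => ⟨⟨a, ha⟩, rfl⟩) (fun b hb => ⟨⟨b, hb⟩, rfl⟩)
  set mI : Submodule k ↥I := (Submodule.comap I.subtype I').restrictScalars k with hmI
  set nJ : Submodule k ↥J := (Submodule.comap J.subtype J').restrictScalars k with hnJ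
  set T : Submodule k (↥I ⊗[k] ↥J) :=
    (LinearMap.range (TensorProduct.map mI.subtype LinearMap.id) ⊔
      LinearMap.range (TensorProduct.map LinearMap.id nJ.subtype)) with hT
  have hrange1 : LinearMap.range (TensorProduct.map (fI ∘ₗ mI.subtype) fJ)
      = (I'R * JR).restrictScalars k := by
    rw [hI'R, hJR]
    exact range_tensor_map I' J _ fJ (fun x => x.2) (fun y => y.2)
      (fun a ha => ⟨⟨⟨a, hI ha⟩, ha⟩, rfl⟩) (fun b hb => ⟨⟨b, hb⟩, rfl⟩)
  have hrange2 : LinearMap.range (TensorProduct.map fI (fJ ∘ₗ nJ.subtype))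
      = (IR * J'R).restrictScalars k := by
    rw [hIR, hJ'R]
    exact range_tensor_map I J' fI _ (fun x => x.2) (fun y => y.2)
      (fun a ha => ⟨⟨a, ha⟩, rfl⟩) (fun b hb => ⟨⟨⟨b, hJ hb⟩, hb⟩, rfl⟩)
  have hsup : ∀ (P Q : Ideal (A ⊗[k] B)),
      P.restrictScalars k ⊔ Q.restrictScalars k = (P + Q).restrictScalars k := by
    intro P Q
    ext x
    rw [Submodule.restrictScalars_mem, Submodule.add_eq_sup]
    simp [Submodule.mem_sup]
  have hmapT : Submodule.map φ T = ((IR * J'R + I'R * JR) : Ideal _).restrictScalars k := by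
    rw [hT, Submodule.map_sup, ← LinearMap.range_comp, ← LinearMap.range_comp]
    show LinearMap.range (TensorProduct.map fI fJ ∘ₗ TensorProduct.map mI.subtype LinearMap.id) ⊔
      LinearMap.range (TensorProduct.map fI fJ ∘ₗ TensorProduct.map LinearMap.id nJ.subtype) = _
    rw [← TensorProduct.map_comp, ← TensorProduct.map_comp, LinearMap.comp_id, LinearMap.comp_id,
      hrange1, hrange2, hsup, add_comm]
  let eIJ : (↥I ⊗[k] ↥J) ≃ₗ[k] ↥(IR * JR) :=
    (LinearEquiv.ofInjective φ hinj).trans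
      ((LinearEquiv.ofEq _ _ hrange).trans
        ((Submodule.restrictScalarsEquiv k (A ⊗[k] B) (A ⊗[k] B) (IR * JR)).restrictScalars k))
  have heIJ : ∀ x : ↥I ⊗[k] ↥J, (eIJ x : A ⊗[k] B) = φ x := fun x => rfl
  have hmapT' : Submodule.map (eIJ : (↥I ⊗[k] ↥J) →ₗ[k] ↥(IR * JR)) T =
      (Submodule.comap (IR * JR).subtype (IR * J'R + I'R * JR)).restrictScalars k := by
    ext x
    rw [Submodule.restrictScalars_mem, Submodule.mem_comap]
    constructor
    · rintro ⟨t, ht, rfl⟩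
      have h1 : φ t ∈ ((IR * J'R + I'R * JR) : Ideal _).restrictScalars k :=
        hmapT ▸ Submodule.mem_map_of_mem ht
      show ((eIJ t : ↥(IR * JR)) : A ⊗[k] B) ∈ _
      rw [heIJ t]
      exact h1
    · intro hx
      have h2 : (x : A ⊗[k] B) ∈ Submodule.map φ T := by rw [hmapT]; exact hx
      obtain ⟨t, ht, hφt⟩ := h2
      exact ⟨t, ht, Subtype.ext ((heIJ t).trans hφt)⟩
  let e := (TensorProduct.congr
      ((Submodule.Quotient.restrictScalarsEquiv k (Submodule.comap I.subtype I')).symm)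
      ((Submodule.Quotient.restrictScalarsEquiv k (Submodule.comap J.subtype J')).symm)).trans
    ((TensorProduct.quotientTensorQuotientEquiv mI nJ).trans
      ((Submodule.Quotient.equiv T
          ((Submodule.comap (IR * JR).subtype (IR * J'R + I'R * JR)).restrictScalars k)
          eIJ hmapT').trans
        (Submodule.Quotient.restrictScalarsEquiv k
          (Submodule.comap (IR * JR).subtype (IR * J'R + I'R * JR)))))
  have hmem : ∀ (u : ↥I) (v : ↥J), ((u : A) ⊗ₜ[k] (v : B)) ∈ IR * JR := by
    intro u v
    have h3 : φ (u ⊗ₜ v) ∈ (IR * JR).restrictScalars k := hrange ▸ ⟨u ⊗ₜ v, rfl⟩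
    simpa [φ, fI, fJ, -Ideal.restrictScalars_mul] using h3
  have hpure : ∀ (u : ↥I) (v : ↥J),
      e (Submodule.Quotient.mk u ⊗ₜ[k] Submodule.Quotient.mk v) =
        Submodule.Quotient.mk (⟨(u : A) ⊗ₜ[k] (v : B), hmem u v⟩ : ↥(IR * JR)) := by
    intro u v
    rfl
  letI : Module (A ⊗[k] B)
      ((↥I ⧸ Submodule.comap I.subtype I') ⊗[k] (↥J ⧸ Submodule.comap J.subtype J')) :=
    tensorTensorModule
  refine ⟨{ toFun := e, map_add' := map_add e, invFun := e.symm,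
            left_inv := e.left_inv, right_inv := e.right_inv, map_smul' := ?_ }⟩
  intro r x
  simp only [RingHom.id_apply]
  induction x using TensorProduct.induction_on with
  | zero => rw [smul_zero, map_zero, smul_zero]
  | add x y hx hy => rw [smul_add, map_add, hx, hy, map_add, smul_add]
  | tmul ub vb =>
    obtain ⟨u, rfl⟩ := Submodule.Quotient.mk_surjective _ ub
    obtain ⟨v, rfl⟩ := Submodule.Quotient.mk_surjective _ vb
    induction r using TensorProduct.induction_on with
    | zero => rw [zero_smul, map_zero, zero_smul]
    | add r s hr hs => rw [add_smul, map_add, hr, hs, add_smul]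
    | tmul a b =>
      rw [tensorTensorModule_smul_tmul, ← Submodule.Quotient.mk_smul,
        ← Submodule.Quotient.mk_smul, hpure, hpure, ← Submodule.Quotient.mk_smul]
      congr 1
      apply Subtype.ext
      show ((a • u : ↥I) : A) ⊗ₜ[k] ((b • v : ↥J) : B)
        = (((a ⊗ₜ[k] b) • (⟨(u : A) ⊗ₜ[k] (v : B), hmem u v⟩ : ↥(IR * JR))) : A ⊗[k] B)
      simp [smul_eq_mul, Algebra.TensorProduct.tmul_mul_tmul]
end Helpers
end
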